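/- Let n ≥ 2, b ≥ 1, c ≥ 0 be integers and let 0 ≤ k ≤ n−1. Then Ψ_n(k,1,b,c) = Ψ_{n−1}(k,c+1,b,c). -/
import Mathlib


open Finset

/-- Kostant partition function: the number of nonnegative integer flows on the
multigraph on vertex set `{0, …, n+1}` whose edge `(i,j)` (with `i < j ≤ n+1`) has
multiplicity `mult i j`, such that the net flow at each vertex `v ≤ n+1` is `b v`. -/
noncomputable def KostantPF (n : ℕ) (mult : ℕ → ℕ → ℕ) (b : ℕ → ℤ) : ℕ :=
  Nat.card {f : ℕ → ℕ → ℕ → ℕ //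
    (∀ i j t, f i j t ≠ 0 → t < mult i j ∧ i < j ∧ j ≤ n + 1) ∧
    (∀ v ≤ n + 1,
      (∑ j ∈ Finset.range (n + 2), ∑ t ∈ Finset.range (mult v j), (f v j t : ℤ)) -
      (∑ i ∈ Finset.range (n + 2), ∑ t ∈ Finset.range (mult i v), (f i v t : ℤ)) = b v)}

/-- Edge multiplicities of the graph `k_{n+2}^{a,b,c}` on `{0,…,n+1}`. -/
def kMult (n a b c : ℕ) : ℕ → ℕ → ℕ := fun i j =>
  if i = 0 ∧ 1 ≤ j ∧ j ≤ n then a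
  else if 1 ≤ i ∧ i ≤ n ∧ j = n + 1 then b
  else if 1 ≤ i ∧ i < j ∧ j ≤ n then c
  else 0

/-- The net flow vector `(0, A 1, …, A n, -(A 1 + ⋯ + A n))` on `{0,…,n+1}`. -/
def netflow (n : ℕ) (A : ℕ → ℤ) : ℕ → ℤ := fun v =>
  if v = 0 then 0
  else if v ≤ n then A v
  else -(∑ i ∈ Finset.Icc 1 n, A i)

/-- `tvec a c i = a - 1 + c * (i - 1)`. -/
def tvec (a c : ℕ) : ℕ → ℤ := fun i => (a : ℤ) - 1 + (c : ℤ) * ((i : ℤ) - 1)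

/-- The Morris constant-term product `M_n(a,b,c)`. -/
noncomputable def MorrisM (n a b c : ℕ) : ℝ :=
  ∏ j ∈ Finset.range n,
    (Real.Gamma ((a : ℝ) - 1 + (b : ℝ) + ((n : ℝ) - 1 + (j : ℝ)) * (c : ℝ) / 2) *
      Real.Gamma ((c : ℝ) / 2 + 1)) /
    (Real.Gamma ((a : ℝ) + (j : ℝ) * (c : ℝ) / 2) *
      Real.Gamma ((b : ℝ) + (j : ℝ) * (c : ℝ) / 2) *
      Real.Gamma (((j : ℝ) + 1) * (c : ℝ) / 2 + 1))

/-- Extend `A : Fin n → ℤ` to `ℕ` so that vertex `v ∈ {1,…,n}` reads `A (v-1)`. -/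
def extFin (n : ℕ) (A : Fin n → ℤ) : ℕ → ℤ := fun v =>
  if h : v - 1 < n then A ⟨v - 1, h⟩ else 0

/-- `Ψ_n(k,a,b,c)`: the sum of `K_{k_{n+2}^{a,b,c}}(0, a_1, …, a_n, -(a_1+⋯+a_n))` over
integer vectors `(a_1,…,a_n)` with `a_i ≤ a-1+c(i-1)` for all `i` and with equality
for exactly `n - k` indices `i`. -/
noncomputable def Psi (n k a b c : ℕ) : ℕ :=
  ∑ᶠ A : Fin n → ℤ,
    if (∀ i : Fin n, A i ≤ (a : ℤ) - 1 + (c : ℤ) * ((i : ℕ) : ℤ)) ∧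
       (Finset.univ.filter (fun i : Fin n =>
          A i = (a : ℤ) - 1 + (c : ℤ) * ((i : ℕ) : ℤ))).card = n - k
    then KostantPF n (kMult n a b c) (netflow n (extFin n A)) else 0

/-- The net flow vector `ν(H) = (0, indeg_H(1)-1, …, indeg_H(n)-1, -Σ(indeg_H(v)-1))`. -/
def nuFlow (n : ℕ) (mult : ℕ → ℕ → ℕ) : ℕ → ℤ :=
  netflow n (fun v => (∑ i ∈ Finset.range (n + 2), (mult i v : ℤ)) - 1)


lemma kMult_j_zero (n a b c i : ℕ) : kMult n a b c i 0 = 0 := by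
  unfold kMult; split_ifs <;> first | rfl | omega | simp_all

lemma kMult_shift (m a b c i j : ℕ) (hi : 1 ≤ i) :
    kMult m a b c i j = kMult (m + 1) 1 b c (i + 1) (j + 1) := by
  unfold kMult; split_ifs <;> first | rfl | omega | simp_all

lemma kMult_into_one (m b c i : ℕ) (hi : 1 ≤ i) : kMult (m + 1) 1 b c i 1 = 0 := by
  unfold kMult; split_ifs <;> first | rfl | omega | simp_all

lemma out_zero {n : ℕ} {mult : ℕ → ℕ → ℕ} {f : ℕ → ℕ → ℕ → ℕ}
    (hsupp : ∀ i j t, f i j t ≠ 0 → t < mult i j ∧ i < j ∧ j ≤ n + 1)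
    {v : ℕ}
    (h : ∑ j ∈ Finset.range (n + 2), ∑ t ∈ Finset.range (mult v j), (f v j t : ℤ) = 0) :
    ∀ j t, f v j t = 0 := by
  intro j t
  by_contra hne
  obtain ⟨ht, hvj, hj⟩ := hsupp v j t hne
  have hjm : j ∈ Finset.range (n + 2) := Finset.mem_range.mpr (by omega)
  have h2 := (Finset.sum_eq_zero_iff_of_nonneg
    (fun x _ => Finset.sum_nonneg fun y _ => Int.natCast_nonneg _)).mp h j hjm
  have h3 := (Finset.sum_eq_zero_iff_of_nonneg
    (fun x _ => Int.natCast_nonneg _)).mp h2 t (Finset.mem_range.mpr ht)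
  exact hne (by exact_mod_cast h3)

lemma extFin_eval (n : ℕ) (A : Fin n → ℤ) (v : ℕ) (h2 : v - 1 < n) :
    extFin n A v = A ⟨v - 1, h2⟩ := dif_pos h2

lemma netflow_mid (n : ℕ) (A : Fin n → ℤ) (v : ℕ) (h1 : v ≠ 0) (h2 : v ≤ n) :
    netflow n (extFin n A) v = A ⟨v - 1, by omega⟩ := by
  unfold netflow
  rw [if_neg h1, if_pos h2, extFin_eval n A v (by omega)]

lemma sum_Icc_one (N : ℕ) (g : ℕ → ℤ) :
    ∑ i ∈ Finset.Icc 1 N, g i = ∑ i ∈ Finset.range N, g (i + 1) := by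
  induction N with
  | zero => simp
  | succ n ih => rw [Finset.sum_Icc_succ_top (by omega), Finset.sum_range_succ, ih]

lemma netflow_shift (m : ℕ) (A : Fin (m + 1) → ℤ) (hA0 : A 0 = 0) (v : ℕ)
    (h1 : 1 ≤ v) (h2 : v ≤ m + 1) :
    netflow m (extFin m (fun i => A i.succ)) v = netflow (m + 1) (extFin (m + 1) A) (v + 1) := by
  rcases Nat.lt_or_ge v (m + 1) with h | h
  · rw [netflow_mid m _ v (by omega) (by omega), netflow_mid (m + 1) A (v + 1) (by omega) (by omega)]
    show A (Fin.succ ⟨v - 1, _⟩) = A ⟨v + 1 - 1, _⟩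
    congr 1
    exact Fin.ext (by simp only [Fin.val_succ]; omega)
  · have hv : v = m + 1 := by omega
    subst hv
    unfold netflow
    rw [if_neg (by omega), if_neg (by omega), if_neg (by omega), if_neg (by omega)]
    congr 1
    rw [sum_Icc_one, sum_Icc_one, Finset.sum_range_succ']
    have e0 : extFin (m + 1) A (0 + 1) = 0 := by
      rw [extFin_eval (m + 1) A 1 (by omega)]
      exact hA0
    rw [e0, add_zero]
    apply Finset.sum_congr rfl
    intro i hi
    have him : i < m := Finset.mem_range.mp hi
    rw [extFin_eval m _ (i + 1) (by omega), extFin_eval (m + 1) A (i + 1 + 1) (by omega)]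
    show A (Fin.succ ⟨i + 1 - 1, _⟩) = A ⟨i + 1 + 1 - 1, _⟩
    congr 1


lemma flow_zero_at_source {n a b c : ℕ} {B : ℕ → ℤ} {f : ℕ → ℕ → ℕ → ℕ}
    (hsupp : ∀ i j t, f i j t ≠ 0 → t < kMult n a b c i j ∧ i < j ∧ j ≤ n + 1)
    (hcons0 : (∑ j ∈ Finset.range (n + 2), ∑ t ∈ Finset.range (kMult n a b c 0 j), (f 0 j t : ℤ)) -
      (∑ i ∈ Finset.range (n + 2), ∑ t ∈ Finset.range (kMult n a b c i 0), (f i 0 t : ℤ)) =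
      netflow n B 0) :
    ∀ j t, f 0 j t = 0 := by
  apply out_zero hsupp
  have hin : (∑ i ∈ Finset.range (n + 2),
      ∑ t ∈ Finset.range (kMult n a b c i 0), (f i 0 t : ℤ)) = 0 :=
    Finset.sum_eq_zero fun i _ => by rw [kMult_j_zero]; simp
  have h0 : netflow n B 0 = 0 := if_pos rfl
  rw [hin, h0, sub_zero] at hcons0
  exact hcons0

lemma in_one_zero (m b c : ℕ) (f : ℕ → ℕ → ℕ → ℕ) (h0 : ∀ j t, f 0 j t = 0) :
    (∑ i ∈ Finset.range (m + 1 + 2),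
      ∑ t ∈ Finset.range (kMult (m + 1) 1 b c i 1), (f i 1 t : ℤ)) = 0 := by
  apply Finset.sum_eq_zero
  intro i _
  rcases Nat.eq_zero_or_pos i with rfl | hi
  · exact Finset.sum_eq_zero fun t _ => by rw [h0]; simp
  · rw [kMult_into_one m b c i hi]; simp

lemma netflow_one (m : ℕ) (A : Fin (m + 1) → ℤ) :
    netflow (m + 1) (extFin (m + 1) A) 1 = A 0 := by
  rw [netflow_mid (m + 1) A 1 (by omega) (by omega)]
  congr 1

lemma big_forced {m b c : ℕ} {A : Fin (m + 1) → ℤ} (hA0 : A 0 = 0) {f : ℕ → ℕ → ℕ → ℕ}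
    (hsupp : ∀ i j t, f i j t ≠ 0 → t < kMult (m + 1) 1 b c i j ∧ i < j ∧ j ≤ m + 1 + 1)
    (hcons : ∀ v ≤ m + 1 + 1,
      (∑ j ∈ Finset.range (m + 1 + 2), ∑ t ∈ Finset.range (kMult (m + 1) 1 b c v j), (f v j t : ℤ)) -
      (∑ i ∈ Finset.range (m + 1 + 2), ∑ t ∈ Finset.range (kMult (m + 1) 1 b c i v), (f i v t : ℤ)) =
      netflow (m + 1) (extFin (m + 1) A) v) :
    (∀ j t, f 0 j t = 0) ∧ (∀ j t, f 1 j t = 0) := by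
  have h0 : ∀ j t, f 0 j t = 0 := flow_zero_at_source hsupp (hcons 0 (by omega))
  refine ⟨h0, ?_⟩
  apply out_zero hsupp
  have h1 := hcons 1 (by omega)
  rw [in_one_zero m b c f h0, netflow_one m A, hA0, sub_zero] at h1
  exact h1


def shrinkF (fl : ℕ → ℕ → ℕ → ℕ) : ℕ → ℕ → ℕ → ℕ :=
  fun i j t => if 1 ≤ i then fl (i + 1) (j + 1) t else 0

def growF (g : ℕ → ℕ → ℕ → ℕ) : ℕ → ℕ → ℕ → ℕ :=
  fun i j t => if 2 ≤ i then g (i - 1) (j - 1) t else 0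

lemma shrinkF_pos (fl : ℕ → ℕ → ℕ → ℕ) {i : ℕ} (hi : 1 ≤ i) (j t : ℕ) :
    shrinkF fl i j t = fl (i + 1) (j + 1) t := if_pos hi

lemma shrinkF_low (fl : ℕ → ℕ → ℕ → ℕ) {i : ℕ} (hi : i < 1) (j t : ℕ) :
    shrinkF fl i j t = 0 := if_neg (by omega)

lemma growF_pos (g : ℕ → ℕ → ℕ → ℕ) {i : ℕ} (hi : 2 ≤ i) (j t : ℕ) :
    growF g i j t = g (i - 1) (j - 1) t := if_pos hi

lemma growF_low (g : ℕ → ℕ → ℕ → ℕ) {i : ℕ} (hi : i < 2) (j t : ℕ) :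
    growF g i j t = 0 := if_neg (by omega)

lemma shrink_supp {m b c : ℕ} {fl : ℕ → ℕ → ℕ → ℕ}
    (hsupp : ∀ i j t, fl i j t ≠ 0 → t < kMult (m + 1) 1 b c i j ∧ i < j ∧ j ≤ m + 1 + 1) :
    ∀ i j t, shrinkF fl i j t ≠ 0 → t < kMult m (c + 1) b c i j ∧ i < j ∧ j ≤ m + 1 := by
  intro i j t hne
  have hi : 1 ≤ i := by
    by_contra h
    exact hne (shrinkF_low fl (by omega) j t)
  rw [shrinkF_pos fl hi] at hne
  obtain ⟨ht, hij, hj⟩ := hsupp _ _ _ hne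
  exact ⟨by rw [kMult_shift m (c + 1) b c i j hi]; exact ht, by omega, by omega⟩

lemma grow_supp {m b c : ℕ} {g : ℕ → ℕ → ℕ → ℕ}
    (hsupp : ∀ i j t, g i j t ≠ 0 → t < kMult m (c + 1) b c i j ∧ i < j ∧ j ≤ m + 1) :
    ∀ i j t, growF g i j t ≠ 0 → t < kMult (m + 1) 1 b c i j ∧ i < j ∧ j ≤ m + 1 + 1 := by
  intro i j t hne
  have hi : 2 ≤ i := by
    by_contra h
    exact hne (growF_low g (by omega) j t)
  rw [growF_pos g hi] at hne
  obtain ⟨ht, hij, hj⟩ := hsupp _ _ _ hne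
  have e : kMult m (c + 1) b c (i - 1) (j - 1) = kMult (m + 1) 1 b c i j := by
    rw [kMult_shift m (c + 1) b c (i - 1) (j - 1) (by omega),
      show i - 1 + 1 = i by omega, show j - 1 + 1 = j by omega]
  exact ⟨e ▸ ht, by omega, by omega⟩

lemma shrink_cons {m b c : ℕ} {A : Fin (m + 1) → ℤ} (hA0 : A 0 = 0) {fl : ℕ → ℕ → ℕ → ℕ}
    (hsupp : ∀ i j t, fl i j t ≠ 0 → t < kMult (m + 1) 1 b c i j ∧ i < j ∧ j ≤ m + 1 + 1)
    (hcons : ∀ v ≤ m + 1 + 1,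
      (∑ j ∈ Finset.range (m + 1 + 2), ∑ t ∈ Finset.range (kMult (m + 1) 1 b c v j), (fl v j t : ℤ)) -
      (∑ i ∈ Finset.range (m + 1 + 2), ∑ t ∈ Finset.range (kMult (m + 1) 1 b c i v), (fl i v t : ℤ)) =
      netflow (m + 1) (extFin (m + 1) A) v) :
    ∀ v ≤ m + 1,
      (∑ j ∈ Finset.range (m + 2), ∑ t ∈ Finset.range (kMult m (c + 1) b c v j), (shrinkF fl v j t : ℤ)) -
      (∑ i ∈ Finset.range (m + 2), ∑ t ∈ Finset.range (kMult m (c + 1) b c i v), (shrinkF fl i v t : ℤ)) =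
      netflow m (extFin m (fun i => A i.succ)) v := by
  obtain ⟨h0, h1⟩ := big_forced hA0 hsupp hcons
  intro v hv
  rcases Nat.eq_zero_or_pos v with rfl | hv1
  · have hout : (∑ j ∈ Finset.range (m + 2),
        ∑ t ∈ Finset.range (kMult m (c + 1) b c 0 j), (shrinkF fl 0 j t : ℤ)) = 0 :=
      Finset.sum_eq_zero fun j _ => Finset.sum_eq_zero fun t _ => by
        rw [shrinkF_low fl (by omega)]; rfl
    have hin : (∑ i ∈ Finset.range (m + 2),
        ∑ t ∈ Finset.range (kMult m (c + 1) b c i 0), (shrinkF fl i 0 t : ℤ)) = 0 :=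
      Finset.sum_eq_zero fun i _ => by rw [kMult_j_zero]; simp
    rw [hout, hin, sub_zero]
    rfl
  · have key := hcons (v + 1) (by omega)
    have hout : (∑ j ∈ Finset.range (m + 2),
        ∑ t ∈ Finset.range (kMult m (c + 1) b c v j), (shrinkF fl v j t : ℤ)) =
        ∑ j ∈ Finset.range (m + 1 + 2),
          ∑ t ∈ Finset.range (kMult (m + 1) 1 b c (v + 1) j), (fl (v + 1) j t : ℤ) := by
      rw [Finset.sum_range_succ'
        (fun j => ∑ t ∈ Finset.range (kMult (m + 1) 1 b c (v + 1) j), (fl (v + 1) j t : ℤ)) (m + 2)]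
      have hz : (∑ t ∈ Finset.range (kMult (m + 1) 1 b c (v + 1) 0), (fl (v + 1) 0 t : ℤ)) = 0 := by
        rw [kMult_j_zero]; simp
      rw [hz, add_zero]
      apply Finset.sum_congr rfl
      intro j _
      rw [← kMult_shift m (c + 1) b c v j hv1]
      exact Finset.sum_congr rfl fun t _ => by rw [shrinkF_pos fl hv1]
    have hin : (∑ i ∈ Finset.range (m + 2),
        ∑ t ∈ Finset.range (kMult m (c + 1) b c i v), (shrinkF fl i v t : ℤ)) =
        ∑ i ∈ Finset.range (m + 1 + 2),
          ∑ t ∈ Finset.range (kMult (m + 1) 1 b c i (v + 1)), (fl i (v + 1) t : ℤ) := by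
      rw [Finset.sum_range_succ'
        (fun i => ∑ t ∈ Finset.range (kMult (m + 1) 1 b c i (v + 1)), (fl i (v + 1) t : ℤ)) (m + 2)]
      have hz : (∑ t ∈ Finset.range (kMult (m + 1) 1 b c 0 (v + 1)), (fl 0 (v + 1) t : ℤ)) = 0 :=
        Finset.sum_eq_zero fun t _ => by rw [h0]; rfl
      rw [hz, add_zero]
      apply Finset.sum_congr rfl
      intro i _
      rcases Nat.eq_zero_or_pos i with rfl | hi1
      · have l : (∑ t ∈ Finset.range (kMult m (c + 1) b c 0 v), (shrinkF fl 0 v t : ℤ)) = 0 :=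
          Finset.sum_eq_zero fun t _ => by rw [shrinkF_low fl (by omega)]; rfl
        have r : (∑ t ∈ Finset.range (kMult (m + 1) 1 b c (0 + 1) (v + 1)),
            (fl (0 + 1) (v + 1) t : ℤ)) = 0 :=
          Finset.sum_eq_zero fun t _ => by rw [show (0:ℕ) + 1 = 1 from rfl, h1]; rfl
        rw [l, r]
      · rw [← kMult_shift m (c + 1) b c i v hi1]
        exact Finset.sum_congr rfl fun t _ => by rw [shrinkF_pos fl hi1]
    rw [hout, hin, key]
    exact (netflow_shift m A hA0 v hv1 hv).symm

lemma grow_cons {m b c : ℕ} {A : Fin (m + 1) → ℤ} (hA0 : A 0 = 0) {g : ℕ → ℕ → ℕ → ℕ}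
    (hsupp : ∀ i j t, g i j t ≠ 0 → t < kMult m (c + 1) b c i j ∧ i < j ∧ j ≤ m + 1)
    (hcons : ∀ v ≤ m + 1,
      (∑ j ∈ Finset.range (m + 2), ∑ t ∈ Finset.range (kMult m (c + 1) b c v j), (g v j t : ℤ)) -
      (∑ i ∈ Finset.range (m + 2), ∑ t ∈ Finset.range (kMult m (c + 1) b c i v), (g i v t : ℤ)) =
      netflow m (extFin m (fun i => A i.succ)) v) :
    ∀ v ≤ m + 1 + 1,
      (∑ j ∈ Finset.range (m + 1 + 2), ∑ t ∈ Finset.range (kMult (m + 1) 1 b c v j), (growF g v j t : ℤ)) -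
      (∑ i ∈ Finset.range (m + 1 + 2), ∑ t ∈ Finset.range (kMult (m + 1) 1 b c i v), (growF g i v t : ℤ)) =
      netflow (m + 1) (extFin (m + 1) A) v := by
  have hg0 : ∀ j t, g 0 j t = 0 := flow_zero_at_source hsupp (hcons 0 (by omega))
  intro v hv
  rcases Nat.lt_or_ge v 2 with hv2 | hv2
  · have hout : (∑ j ∈ Finset.range (m + 1 + 2),
        ∑ t ∈ Finset.range (kMult (m + 1) 1 b c v j), (growF g v j t : ℤ)) = 0 :=
      Finset.sum_eq_zero fun j _ => Finset.sum_eq_zero fun t _ => by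
        rw [growF_low g hv2]; rfl
    rcases Nat.eq_zero_or_pos v with rfl | hv1
    · have hin : (∑ i ∈ Finset.range (m + 1 + 2),
          ∑ t ∈ Finset.range (kMult (m + 1) 1 b c i 0), (growF g i 0 t : ℤ)) = 0 :=
        Finset.sum_eq_zero fun i _ => by rw [kMult_j_zero]; simp
      rw [hout, hin, sub_zero]
      rfl
    · have hv1' : v = 1 := by omega
      subst hv1'
      have hin := in_one_zero m b c (growF g) (fun j t => growF_low g (by omega) j t)
      rw [hout, hin, sub_zero, netflow_one m A, hA0]
  · have key := hcons (v - 1) (by omega)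
    have hout : (∑ j ∈ Finset.range (m + 1 + 2),
        ∑ t ∈ Finset.range (kMult (m + 1) 1 b c v j), (growF g v j t : ℤ)) =
        ∑ j ∈ Finset.range (m + 2),
          ∑ t ∈ Finset.range (kMult m (c + 1) b c (v - 1) j), (g (v - 1) j t : ℤ) := by
      rw [Finset.sum_range_succ'
        (fun j => ∑ t ∈ Finset.range (kMult (m + 1) 1 b c v j), (growF g v j t : ℤ)) (m + 2)]
      have hz : (∑ t ∈ Finset.range (kMult (m + 1) 1 b c v 0), (growF g v 0 t : ℤ)) = 0 := by
        rw [kMult_j_zero]; simp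
      rw [hz, add_zero]
      apply Finset.sum_congr rfl
      intro j _
      have e : kMult m (c + 1) b c (v - 1) j = kMult (m + 1) 1 b c v (j + 1) := by
        rw [kMult_shift m (c + 1) b c (v - 1) j (by omega), show v - 1 + 1 = v by omega]
      rw [e]
      apply Finset.sum_congr rfl
      intro t _
      rw [growF_pos g hv2]
      congr 2 <;> omega
    have hin : (∑ i ∈ Finset.range (m + 1 + 2),
        ∑ t ∈ Finset.range (kMult (m + 1) 1 b c i v), (growF g i v t : ℤ)) =
        ∑ i ∈ Finset.range (m + 2),
          ∑ t ∈ Finset.range (kMult m (c + 1) b c i (v - 1)), (g i (v - 1) t : ℤ) := by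
      rw [Finset.sum_range_succ'
        (fun i => ∑ t ∈ Finset.range (kMult (m + 1) 1 b c i v), (growF g i v t : ℤ)) (m + 2)]
      have hz : (∑ t ∈ Finset.range (kMult (m + 1) 1 b c 0 v), (growF g 0 v t : ℤ)) = 0 :=
        Finset.sum_eq_zero fun t _ => by rw [growF_low g (by omega)]; rfl
      rw [hz, add_zero]
      apply Finset.sum_congr rfl
      intro i _
      rcases Nat.eq_zero_or_pos i with rfl | hi1
      · have l : (∑ t ∈ Finset.range (kMult (m + 1) 1 b c (0 + 1) v), (growF g (0 + 1) v t : ℤ)) = 0 :=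
          Finset.sum_eq_zero fun t _ => by rw [growF_low g (by omega)]; rfl
        have r : (∑ t ∈ Finset.range (kMult m (c + 1) b c 0 (v - 1)), (g 0 (v - 1) t : ℤ)) = 0 :=
          Finset.sum_eq_zero fun t _ => by rw [hg0]; rfl
        rw [l, r]
      · have e : kMult m (c + 1) b c i (v - 1) = kMult (m + 1) 1 b c (i + 1) v := by
          rw [kMult_shift m (c + 1) b c i (v - 1) hi1, show v - 1 + 1 = v by omega]
        rw [e]
        apply Finset.sum_congr rfl
        intro t _
        rw [growF_pos g (by omega)]
        congr 2 <;> omega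
    rw [hout, hin, key]
    have nf := netflow_shift m A hA0 (v - 1) (by omega) (by omega)
    rw [show v - 1 + 1 = v by omega] at nf
    exact nf


lemma grow_shrink {m b c : ℕ} {fl : ℕ → ℕ → ℕ → ℕ}
    (hsupp : ∀ i j t, fl i j t ≠ 0 → t < kMult (m + 1) 1 b c i j ∧ i < j ∧ j ≤ m + 1 + 1)
    (h0 : ∀ j t, fl 0 j t = 0) (h1 : ∀ j t, fl 1 j t = 0) :
    growF (shrinkF fl) = fl := by
  funext i j t
  rcases Nat.lt_or_ge i 2 with hi | hi
  · rw [growF_low (shrinkF fl) hi]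
    interval_cases i
    · exact (h0 j t).symm
    · exact (h1 j t).symm
  · rw [growF_pos (shrinkF fl) hi, shrinkF_pos fl (by omega)]
    rcases Nat.eq_zero_or_pos j with rfl | hj
    · -- fl (i-1+1) (0-1+1) t = fl i 0 t : both are 0
      have l : fl (i - 1 + 1) (0 - 1 + 1) t = 0 := by
        by_contra hne
        obtain ⟨_, hij, _⟩ := hsupp _ _ _ hne
        omega
      have r : fl i 0 t = 0 := by
        by_contra hne
        obtain ⟨_, hij, _⟩ := hsupp _ _ _ hne
        omega
      rw [l, r]
    · congr 1 <;> omega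

lemma shrink_grow {g : ℕ → ℕ → ℕ → ℕ} (hg0 : ∀ j t, g 0 j t = 0) :
    shrinkF (growF g) = g := by
  funext i j t
  rcases Nat.eq_zero_or_pos i with rfl | hi
  · rw [shrinkF_low (growF g) (by omega)]
    exact (hg0 j t).symm
  · rw [shrinkF_pos (growF g) hi, growF_pos g (by omega)]
    congr 1 <;> omega

lemma kostant_shift (m b c : ℕ) (A : Fin (m + 1) → ℤ) (hA0 : A 0 = 0) :
    KostantPF (m + 1) (kMult (m + 1) 1 b c) (netflow (m + 1) (extFin (m + 1) A)) =
      KostantPF m (kMult m (c + 1) b c) (netflow m (extFin m (fun i => A i.succ))) := by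
  unfold KostantPF
  apply Nat.card_congr
  refine ⟨fun F => ⟨shrinkF F.1, shrink_supp F.2.1, shrink_cons hA0 F.2.1 F.2.2⟩,
          fun G => ⟨growF G.1, grow_supp G.2.1, grow_cons hA0 G.2.1 G.2.2⟩, ?_, ?_⟩
  · intro F
    apply Subtype.ext
    obtain ⟨hf0, hf1⟩ := big_forced hA0 F.2.1 F.2.2
    exact grow_shrink F.2.1 hf0 hf1
  · intro G
    apply Subtype.ext
    have hg0 : ∀ j t, G.1 0 j t = 0 :=
      flow_zero_at_source G.2.1 (G.2.2 0 (by omega))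
    exact shrink_grow hg0

lemma kostant_neg (m b c : ℕ) (A : Fin (m + 1) → ℤ) (hA0 : A 0 < 0) :
    KostantPF (m + 1) (kMult (m + 1) 1 b c) (netflow (m + 1) (extFin (m + 1) A)) = 0 := by
  unfold KostantPF
  rw [Nat.card_eq_zero]
  left
  constructor
  rintro ⟨fl, hsupp, hcons⟩
  have h0 : ∀ j t, fl 0 j t = 0 := flow_zero_at_source hsupp (hcons 0 (by omega))
  have h1 := hcons 1 (by omega)
  rw [in_one_zero m b c fl h0, netflow_one m A, sub_zero] at h1
  have hout : (0:ℤ) ≤ ∑ j ∈ Finset.range (m + 1 + 2),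
      ∑ t ∈ Finset.range (kMult (m + 1) 1 b c 1 j), (fl 1 j t : ℤ) :=
    Finset.sum_nonneg fun _ _ => Finset.sum_nonneg fun _ _ => Int.natCast_nonneg _
  omega


def consZ (m : ℕ) (A' : Fin m → ℤ) : Fin (m + 1) → ℤ := Fin.cons 0 A'

lemma consZ_zero (m : ℕ) (A' : Fin m → ℤ) : consZ m A' 0 = 0 := Fin.cons_zero _ _

lemma consZ_succ (m : ℕ) (A' : Fin m → ℤ) (i : Fin m) : consZ m A' i.succ = A' i :=
  Fin.cons_succ _ _ _

lemma consZ_inj (m : ℕ) : Function.Injective (consZ m) := fun x y h => by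
  have := congrArg Fin.tail h
  simpa [consZ, Fin.tail_cons] using this

lemma finsum_cons_reduce {M : Type} [AddCommMonoid M] {m : ℕ}
    (F : (Fin (m + 1) → ℤ) → M) (G : (Fin m → ℤ) → M)
    (hv : ∀ A, A 0 ≠ 0 → F A = 0) (hFG : ∀ A', F (consZ m A') = G A') :
    ∑ᶠ A, F A = ∑ᶠ A', G A' := by
  have hι : Function.Injective (consZ m) := consZ_inj m
  have hsub : Function.support F ⊆ Set.range (consZ m) := by
    intro A hA
    have hA0 : A 0 = 0 := by
      by_contra hne
      exact hA (hv A hne)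
    exact ⟨Fin.tail A, by rw [show consZ m (Fin.tail A) = Fin.cons 0 (Fin.tail A) from rfl, ← hA0]; exact Fin.cons_self_tail A⟩
  calc ∑ᶠ A, F A = ∑ᶠ A ∈ Set.univ, F A := (finsum_mem_univ F).symm
    _ = ∑ᶠ A ∈ Set.range (consZ m), F A :=
        finsum_mem_inter_support_eq F _ _
          (by rw [Set.univ_inter, Set.inter_eq_right.mpr hsub])
    _ = ∑ᶠ A', F (consZ m A') := finsum_mem_range hι
    _ = ∑ᶠ A', G A' := finsum_congr hFG

theorem stmt10 (n b c k : ℕ) (hn : 2 ≤ n) (hb : 1 ≤ b) (hk : k ≤ n - 1) :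
    Psi n k 1 b c = Psi (n - 1) k (c + 1) b c := by
  obtain ⟨m, rfl⟩ : ∃ m, n = m + 1 := ⟨n - 1, by omega⟩
  have hk' : k ≤ m := by omega
  rw [show m + 1 - 1 = m from rfl]
  unfold Psi
  have hbound : ∀ i : Fin m,
      ((1 : ℕ) : ℤ) - 1 + (c : ℤ) * (((i.succ : Fin (m + 1)) : ℕ) : ℤ) =
      ((c + 1 : ℕ) : ℤ) - 1 + (c : ℤ) * ((i : ℕ) : ℤ) := by
    intro i
    push_cast [Fin.val_succ]
    ring
  apply finsum_cons_reduce
  · intro A hne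
    by_cases hcond : (∀ i : Fin (m + 1), A i ≤ ((1 : ℕ) : ℤ) - 1 + (c : ℤ) * ((i : ℕ) : ℤ)) ∧
        (Finset.univ.filter (fun i : Fin (m + 1) =>
          A i = ((1 : ℕ) : ℤ) - 1 + (c : ℤ) * ((i : ℕ) : ℤ))).card = m + 1 - k
    · rw [if_pos hcond]
      have hle := hcond.1 0
      simp only [Fin.val_zero, Nat.cast_zero, mul_zero, add_zero, Nat.cast_one, sub_self] at hle
      exact kostant_neg m b c A (lt_of_le_of_ne hle hne)
    · rw [if_neg hcond]
  · intro A'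
    have hforall : (∀ i : Fin (m + 1),
          consZ m A' i ≤ ((1 : ℕ) : ℤ) - 1 + (c : ℤ) * ((i : ℕ) : ℤ)) ↔
        (∀ i : Fin m, A' i ≤ ((c + 1 : ℕ) : ℤ) - 1 + (c : ℤ) * ((i : ℕ) : ℤ)) := by
      constructor
      · intro h i
        have hh := h i.succ
        rw [consZ_succ, hbound i] at hh
        exact hh
      · intro h i
        induction i using Fin.cases with
        | zero =>
          rw [consZ_zero]
          simp
        | succ i' =>
          rw [consZ_succ, hbound i']
          exact h i'
    have hcard : (Finset.univ.filter (fun i : Fin (m + 1) =>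
          consZ m A' i = ((1 : ℕ) : ℤ) - 1 + (c : ℤ) * ((i : ℕ) : ℤ))).card =
        (Finset.univ.filter (fun i : Fin m =>
          A' i = ((c + 1 : ℕ) : ℤ) - 1 + (c : ℤ) * ((i : ℕ) : ℤ))).card + 1 := by
      rw [Finset.card_filter, Finset.card_filter, Fin.sum_univ_succ]
      have h₀ : (if consZ m A' 0 =
          ((1 : ℕ) : ℤ) - 1 + (c : ℤ) * (((0 : Fin (m + 1)) : ℕ) : ℤ) then 1 else 0) = 1 := by
        rw [if_pos]
        rw [consZ_zero]
        simp
      rw [h₀, add_comm]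
      congr 1
      apply Finset.sum_congr rfl
      intro i _
      rw [consZ_succ, hbound i]
    have hiff : ((∀ i : Fin (m + 1),
          consZ m A' i ≤ ((1 : ℕ) : ℤ) - 1 + (c : ℤ) * ((i : ℕ) : ℤ)) ∧
        (Finset.univ.filter (fun i : Fin (m + 1) =>
          consZ m A' i = ((1 : ℕ) : ℤ) - 1 + (c : ℤ) * ((i : ℕ) : ℤ))).card = m + 1 - k) ↔
        ((∀ i : Fin m, A' i ≤ ((c + 1 : ℕ) : ℤ) - 1 + (c : ℤ) * ((i : ℕ) : ℤ)) ∧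
        (Finset.univ.filter (fun i : Fin m =>
          A' i = ((c + 1 : ℕ) : ℤ) - 1 + (c : ℤ) * ((i : ℕ) : ℤ))).card = m - k) := by
      apply and_congr hforall
      rw [hcard]
      omega
    have hK : KostantPF (m + 1) (kMult (m + 1) 1 b c)
          (netflow (m + 1) (extFin (m + 1) (consZ m A'))) =
        KostantPF m (kMult m (c + 1) b c) (netflow m (extFin m A')) := by
      rw [kostant_shift m b c (consZ m A') (consZ_zero m A')]
      congr 1
    exact if_congr hiff hK rfl
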